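/- arXiv:1110.6261 — 2 statements merged into one kernel-verified Lean document; each statement's English description precedes it below -/
import Mathlib

section
/- In the convexity inequality ρ(A + tC + (1−t)D) ≤ t·ρ(A + C) + (1−t)·ρ(A + D) for an irreducible nonnegative tensor A and nonnegative diagonal tensors C, D, equality holds for some t ∈ (0,1) if and only if D − C is a scalar multiple of the unit tensor I, and in that case the scalar is ρ(A + D) − ρ(A + C). -/
open Finset

/-- An `(m+1)`-order, `n`-dimensional real tensor. -/
abbrev Tensor (m n : ℕ) := (Fin (m + 1) → Fin n) → ℝ

/-- `(A x^{m-1})_i` over ℂ. -/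
noncomputable def tApplyC {m n : ℕ} (T : Tensor m n) (x : Fin n → ℂ) (i : Fin n) : ℂ :=
  ∑ j : Fin m → Fin n, (T (Fin.cons i j) : ℂ) * ∏ k, x (j k)

/-- `(A x^{m-1})_i` over ℝ. -/
noncomputable def tApply {m n : ℕ} (T : Tensor m n) (x : Fin n → ℝ) (i : Fin n) : ℝ :=
  ∑ j : Fin m → Fin n, T (Fin.cons i j) * ∏ k, x (j k)

/-- eigenvalue of a tensor -/
def IsEig {m n : ℕ} (T : Tensor m n) (lam : ℂ) : Prop :=
  ∃ x : Fin n → ℂ, x ≠ 0 ∧ ∀ i, tApplyC T x i = lam * (x i) ^ m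

/-- spectral radius -/
noncomputable def specRad {m n : ℕ} (T : Tensor m n) : ℝ :=
  sSup {r : ℝ | ∃ lam : ℂ, IsEig T lam ∧ ‖lam‖ = r}

/-- the unit tensor -/
def unitT (m n : ℕ) : Tensor m n := fun idx => if ∀ k, idx k = idx 0 then 1 else 0

def TNonneg {m n : ℕ} (T : Tensor m n) : Prop := ∀ idx, 0 ≤ T idx

def TEssNonneg {m n : ℕ} (T : Tensor m n) : Prop :=
  ∀ idx, (¬ ∀ k, idx k = idx 0) → 0 ≤ T idx

def TDiagonal {m n : ℕ} (T : Tensor m n) : Prop :=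
  ∀ idx, (¬ ∀ k, idx k = idx 0) → T idx = 0

def TReducible {m n : ℕ} (T : Tensor m n) : Prop :=
  ∃ S : Finset (Fin n), S.Nonempty ∧ S ≠ Finset.univ ∧
    ∀ i ∈ S, ∀ j : Fin m → Fin n, (∀ k, j k ∉ S) → T (Fin.cons i j) = 0

def TIrreducible {m n : ℕ} (T : Tensor m n) : Prop := ¬ TReducible T

def TSymmetric {m n : ℕ} (T : Tensor m n) : Prop :=
  ∀ (σ : Equiv.Perm (Fin (m + 1))) (idx : Fin (m + 1) → Fin n), T (idx ∘ σ) = T idx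

/-- shift making a tensor nonnegative -/
noncomputable def shiftAlpha {m n : ℕ} (T : Tensor m n) : ℝ :=
  (∑ i : Fin n, |T (fun _ => i)|) + 1

/-- dominant eigenvalue of an essentially nonnegative tensor -/
noncomputable def domEig {m n : ℕ} (T : Tensor m n) : ℝ :=
  specRad (fun idx => T idx + shiftAlpha T * unitT m n idx) - shiftAlpha T

/-- homogeneous form `T x^m` -/
noncomputable def tForm {m n : ℕ} (T : Tensor m n) (x : Fin n → ℝ) : ℝ :=
  ∑ idx : Fin (m + 1) → Fin n, T idx * ∏ k, x (idx k)

/-!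
The Perron vectors `u`, `v` of `A + C` and `A + D` give the positive test vector
`w = u ^ t * v ^ (1 - t)`. Row-wise Hölder and weighted AM-GM show that `w` is a
subeigenvector of `A + t C + (1 - t) D` for `t ρ(A + C) + (1 - t) ρ(A + D)`. For an irreducible
tensor a subeigenvector for the spectral radius is an eigenvector (a minimum principle), so in the
equality case every AM-GM step is an equality, which forces
`ρ(A + C) - C_{i…i} = ρ(A + D) - D_{i…i}` for every `i`. Conversely, if `D - C = c I`, the three
tensors are shifts of one of them by nonnegative multiples of `I`, and adding `s I` adds exactly
`s` to the spectral radius, by the Collatz bound applied to both Perron vectors.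
-/

def HasPerronVectors (m n : ℕ) : Prop :=
  ∀ B : Tensor m n, TNonneg B → TIrreducible B →
    ∃ x : Fin n → ℝ, (∀ i, 0 < x i) ∧ ∀ i, tApply B x i = specRad B * x i ^ m

-- Collatz: `ρ(B) ≤ max_i (B x^{m})_i / x_i ^ m`, stated without the maximum.
def HasCollatzBound (m n : ℕ) : Prop :=
  ∀ B : Tensor m n, TNonneg B → ∀ x : Fin n → ℝ, (∀ i, 0 < x i) →
    ∀ r : ℝ, (∀ i, tApply B x i ≤ r * x i ^ m) → specRad B ≤ r

theorem Real.sum_rpow_mul_rpow_one_sub_le {ι : Type*} [Fintype ι] {t : ℝ} (ht0 : 0 < t)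
    (ht1 : t < 1) (f g : ι → ℝ) (hf : ∀ j, 0 ≤ f j) (hg : ∀ j, 0 ≤ g j) :
    ∑ j, f j ^ t * g j ^ (1 - t) ≤ (∑ j, f j) ^ t * (∑ j, g j) ^ (1 - t) := by
  have ht1' : 0 < 1 - t := by linarith
  have hpq : Real.HolderConjugate (1 / t) (1 / (1 - t)) :=
    ⟨by rw [one_div, one_div, inv_inv, inv_inv, inv_one]; ring, one_div_pos.2 ht0,
      one_div_pos.2 ht1'⟩
  have h := Real.inner_le_Lp_mul_Lq_of_nonneg (s := univ) hpq
    (fun j _ => Real.rpow_nonneg (hf j) t) (fun j _ => Real.rpow_nonneg (hg j) (1 - t))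
  have hf' : ∀ j, (f j ^ t) ^ (1 / t) = f j := fun j => by
    rw [← Real.rpow_mul (hf j), mul_one_div_cancel ht0.ne', Real.rpow_one]
  have hg' : ∀ j, (g j ^ (1 - t)) ^ (1 / (1 - t)) = g j := fun j => by
    rw [← Real.rpow_mul (hg j), mul_one_div_cancel ht1'.ne', Real.rpow_one]
  simpa only [hf', hg', one_div_one_div] using h

variable {m n : ℕ}

section tApply

lemma tApply_add (T S : Tensor m n) (x : Fin n → ℝ) (i : Fin n) :
    tApply (fun idx => T idx + S idx) x i = tApply T x i + tApply S x i := by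
  simp only [tApply, add_mul, sum_add_distrib]

lemma tApply_const_mul (c : ℝ) (T : Tensor m n) (x : Fin n → ℝ) (i : Fin n) :
    tApply (fun idx => c * T idx) x i = c * tApply T x i := by
  simp only [tApply, mul_assoc, mul_sum]

lemma tApply_mul_vec (T : Tensor m n) (c : ℝ) (x : Fin n → ℝ) (i : Fin n) :
    tApply T (fun j => c * x j) i = c ^ m * tApply T x i := by
  simp only [tApply, mul_sum, prod_mul_distrib, prod_const, card_univ, Fintype.card_fin]
  exact sum_congr rfl fun _ _ => by ring

lemma TNonneg.tApply_nonneg {T : Tensor m n} (hT : TNonneg T) {x : Fin n → ℝ}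
    (hx : ∀ i, 0 ≤ x i) (i : Fin n) : 0 ≤ tApply T x i :=
  sum_nonneg fun _ _ => mul_nonneg (hT _) (prod_nonneg fun _ _ => hx _)

lemma TNonneg.tApply_mono {T : Tensor m n} (hT : TNonneg T) {x z : Fin n → ℝ}
    (hx : ∀ i, 0 ≤ x i) (hxz : ∀ i, x i ≤ z i) (i : Fin n) : tApply T x i ≤ tApply T z i :=
  sum_le_sum fun _ _ =>
    mul_le_mul_of_nonneg_left (prod_le_prod (fun _ _ => hx _) fun _ _ => hxz _) (hT _)

lemma TNonneg.nonneg_of_tApply_eq {T : Tensor m n} (hT : TNonneg T) {x : Fin n → ℝ}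
    (hx : ∀ i, 0 < x i) {p : ℝ} {i : Fin n} (h : tApply T x i = p * x i ^ m) : 0 ≤ p :=
  nonneg_of_mul_nonneg_left (h ▸ hT.tApply_nonneg (fun j => (hx j).le) i) (pow_pos (hx i) m)

lemma TNonneg.tApply_rpow_mul_rpow_le {T : Tensor m n} (hT : TNonneg T) {u v : Fin n → ℝ}
    (hu : ∀ i, 0 ≤ u i) (hv : ∀ i, 0 ≤ v i) {t : ℝ} (ht0 : 0 < t) (ht1 : t < 1) (i : Fin n) :
    tApply T (fun a => u a ^ t * v a ^ (1 - t)) i ≤ tApply T u i ^ t * tApply T v i ^ (1 - t) := by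
  have hterm : ∀ j : Fin m → Fin n,
      T (Fin.cons i j) * ∏ k, (u (j k) ^ t * v (j k) ^ (1 - t))
        = (T (Fin.cons i j) * ∏ k, u (j k)) ^ t * (T (Fin.cons i j) * ∏ k, v (j k)) ^ (1 - t) := by
    intro j
    have hT_split : T (Fin.cons i j) = T (Fin.cons i j) ^ t * T (Fin.cons i j) ^ (1 - t) := by
      rw [← Real.rpow_add' (hT _) (by norm_num), add_sub_cancel, Real.rpow_one]
    rw [Real.mul_rpow (hT _) (prod_nonneg fun _ _ => hu _),
      Real.mul_rpow (hT _) (prod_nonneg fun _ _ => hv _),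
      ← Real.finsetProd_rpow _ _ (fun _ _ => hu _), ← Real.finsetProd_rpow _ _ (fun _ _ => hv _),
      prod_mul_distrib]
    nth_rw 1 [hT_split]
    ring
  rw [tApply, sum_congr rfl fun j _ => hterm j]
  exact Real.sum_rpow_mul_rpow_one_sub_le ht0 ht1 _ _
    (fun _ => mul_nonneg (hT _) (prod_nonneg fun _ _ => hu _))
    (fun _ => mul_nonneg (hT _) (prod_nonneg fun _ _ => hv _))

end tApply

section Diagonal

lemma TDiagonal.sub {C D : Tensor m n} (hD : TDiagonal D) (hC : TDiagonal C) :
    TDiagonal (fun idx => D idx - C idx) := fun idx h => by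
  simp only [hD idx h, hC idx h, sub_zero]

lemma TDiagonal.eq_mul_unitT {E : Tensor m n} (hE : TDiagonal E) {c : ℝ}
    (h : ∀ i, E (fun _ => i) = c) (idx : Fin (m + 1) → Fin n) : E idx = c * unitT m n idx := by
  by_cases hidx : ∀ k, idx k = idx 0
  · rw [show idx = fun _ => idx 0 from funext hidx, h, unitT, if_pos fun _ => rfl, mul_one]
  · rw [hE idx hidx, unitT, if_neg hidx, mul_zero]

lemma TDiagonal.tApply_eq {T : Tensor m n} (hT : TDiagonal T) (x : Fin n → ℝ) (i : Fin n) :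
    tApply T x i = T (fun _ => i) * x i ^ m := by
  rw [tApply, Fintype.sum_eq_single (fun _ => i)]
  · have hcons : (Fin.cons i (fun _ => i) : Fin (m + 1) → Fin n) = fun _ => i :=
      funext fun k => Fin.cases rfl (fun _ => rfl) k
    simp only [hcons, prod_const, card_univ, Fintype.card_fin]
  · intro j hj
    refine mul_eq_zero_of_left (hT _ fun hconst => hj (funext fun k => ?_)) _
    simpa using hconst k.succ

lemma tApply_add_diagonal (T : Tensor m n) {E : Tensor m n} (hE : TDiagonal E) (x : Fin n → ℝ)
    (i : Fin n) :
    tApply (fun idx => T idx + E idx) x i = tApply T x i + E (fun _ => i) * x i ^ m := by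
  rw [tApply_add, hE.tApply_eq]

lemma unitT_diagonal : TDiagonal (unitT m n) := fun _ h => if_neg h

lemma unitT_nonneg : TNonneg (unitT m n) := fun idx => by
  unfold unitT
  split <;> norm_num

end Diagonal

section Irreducible

lemma TNonneg.add {T S : Tensor m n} (hT : TNonneg T) (hS : TNonneg S) :
    TNonneg (fun idx => T idx + S idx) := fun idx => add_nonneg (hT idx) (hS idx)

lemma TIrreducible.mono {T S : Tensor m n} (h : TIrreducible T) (hT : TNonneg T)
    (hTS : ∀ idx, T idx ≤ S idx) : TIrreducible S := by
  rintro ⟨I, hI, hIuniv, hzero⟩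
  exact h ⟨I, hI, hIuniv, fun i hi j hj =>
    le_antisymm ((hTS _).trans_eq (hzero i hi j hj)) (hT _)⟩

lemma TNonneg.eq_of_tApply_eq {T : Tensor m n} (hT : TNonneg T) {y z : Fin n → ℝ}
    (hy : ∀ i, 0 < y i) (hyz : ∀ i, y i ≤ z i) {a : Fin n} (ha : tApply T y a = tApply T z a)
    {j : Fin m → Fin n} (hj : T (Fin.cons a j) ≠ 0) (k : Fin m) : y (j k) = z (j k) := by
  have hprod_le : ∀ j' : Fin m → Fin n, ∏ k, y (j' k) ≤ ∏ k, z (j' k) := fun _ =>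
    prod_le_prod (fun _ _ => (hy _).le) fun _ _ => hyz _
  have hsum : ∑ j', T (Fin.cons a j') * (∏ k, z (j' k) - ∏ k, y (j' k)) = 0 := by
    simp only [mul_sub, sum_sub_distrib]
    exact sub_eq_zero.2 ha.symm
  have hterm := (sum_eq_zero_iff_of_nonneg fun j' _ =>
    mul_nonneg (hT _) (sub_nonneg.2 (hprod_le j'))).1 hsum j (mem_univ j)
  have hprod : ∏ k, y (j k) = ∏ k, z (j k) :=
    (sub_eq_zero.1 ((mul_eq_zero.1 hterm).resolve_left hj)).symm
  by_contra hne
  exact (prod_lt_prod (fun _ _ => hy _) (fun _ _ => hyz _)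
    ⟨k, mem_univ k, lt_of_le_of_ne (hyz _) hne⟩).ne hprod

lemma TIrreducible.eq_of_tApply_eq_on_contact {T : Tensor m n} (hirr : TIrreducible T)
    (hT : TNonneg T) (hm : 0 < m) {y z : Fin n → ℝ} (hy : ∀ i, 0 < y i) (hyz : ∀ i, y i ≤ z i)
    {i₀ : Fin n} (hi₀ : y i₀ = z i₀) (hcontact : ∀ a, y a = z a → tApply T y a = tApply T z a) :
    y = z := by
  classical
  set S := univ.filter fun a => y a = z a
  by_contra hne
  have hS : S ≠ univ := fun hS => hne (funext fun a => (mem_filter.1 (hS ▸ mem_univ a : a ∈ S)).2)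
  refine hirr ⟨S, ⟨i₀, mem_filter.2 ⟨mem_univ _, hi₀⟩⟩, hS, fun a ha j hj => ?_⟩
  by_contra hT0
  have ha' := (mem_filter.1 ha).2
  exact hj ⟨0, hm⟩ (mem_filter.2 ⟨mem_univ _,
    hT.eq_of_tApply_eq hy hyz (hcontact a ha') hT0 ⟨0, hm⟩⟩)

lemma TIrreducible.tApply_eq_of_le {T : Tensor m n} (hirr : TIrreducible T) (hT : TNonneg T)
    {x z : Fin n → ℝ} (hx : ∀ i, 0 < x i) (hz : ∀ i, 0 < z i) {ρ : ℝ}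
    (heig : ∀ i, tApply T x i = ρ * x i ^ m) (hle : ∀ i, tApply T z i ≤ ρ * z i ^ m) (i : Fin n) :
    tApply T z i = ρ * z i ^ m := by
  rcases Nat.eq_zero_or_pos m with rfl | hm
  · simpa [tApply] using heig i
  -- compare `z` with the largest multiple `θ x` below it; they touch at `i₀`
  obtain ⟨i₀, -, hi₀⟩ := exists_min_image univ (fun j => z j / x j) ⟨i, mem_univ i⟩
  set θ := z i₀ / x i₀
  have hyz : ∀ j, θ * x j ≤ z j := fun j =>
    (le_div_iff₀ (hx j)).1 (hi₀ j (mem_univ j))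
  have hy : ∀ j, 0 < θ * x j := fun j => mul_pos (div_pos (hz i₀) (hx i₀)) (hx j)
  have hθx : ∀ j, tApply T (fun j => θ * x j) j = ρ * (θ * x j) ^ m := fun j => by
    rw [tApply_mul_vec, heig, mul_pow]
    ring
  have hyz_eq : (fun j => θ * x j) = z := by
    refine hirr.eq_of_tApply_eq_on_contact hT hm hy hyz (div_mul_cancel₀ _ (hx i₀).ne')
      fun a ha => le_antisymm (hT.tApply_mono (fun j => (hy j).le) hyz a) ?_
    rw [hθx, ha]
    exact hle a
  rw [← hyz_eq, hθx]

end Irreducible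

lemma hasCollatzBound_of_le_sup' (hn : 0 < n)
    (hCollatz : ∀ B : Tensor m n, TNonneg B → ∀ z : Fin n → ℝ, (∀ i, 0 < z i) →
      specRad B ≤ Finset.univ.sup' (Finset.univ_nonempty_iff.mpr ⟨⟨0, hn⟩⟩)
        (fun i => tApply B z i / (z i) ^ m)) :
    HasCollatzBound m n := fun B hB z hz _ hr =>
  (hCollatz B hB z hz).trans (sup'_le _ _ fun i _ => (div_le_iff₀ (pow_pos (hz i) m)).2 (hr i))

lemma specRad_eq_add_of_eq_add_mul_unitT (hPF : HasPerronVectors m n)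
    (hCol : HasCollatzBound m n) {B B' : Tensor m n} (hB : TNonneg B) (hirr : TIrreducible B)
    {s : ℝ} (hs : 0 ≤ s) (hB' : ∀ idx, B' idx = B idx + s * unitT m n idx) :
    specRad B' = specRad B + s := by
  obtain rfl : B' = fun idx => B idx + s * unitT m n idx := funext hB'
  have hsI : TNonneg fun idx => s * unitT m n idx := fun idx => mul_nonneg hs (unitT_nonneg idx)
  have hB'nn := hB.add hsI
  have hB'irr := hirr.mono hB fun idx => le_add_of_nonneg_right (hsI idx)
  have happ : ∀ z i,
      tApply (fun idx => B idx + s * unitT m n idx) z i = tApply B z i + s * z i ^ m := fun z i => by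
      rw [tApply_add, tApply_const_mul, unitT_diagonal.tApply_eq, unitT, if_pos fun _ => rfl,
        one_mul]
  obtain ⟨x, hx, hxeig⟩ := hPF B hB hirr
  obtain ⟨y, hy, hyeig⟩ := hPF _ hB'nn hB'irr
  have hle : specRad (fun idx => B idx + s * unitT m n idx) ≤ specRad B + s :=
    hCol _ hB'nn x hx _ fun i => by rw [happ, hxeig]; linarith
  have hge : specRad B ≤ specRad (fun idx => B idx + s * unitT m n idx) - s :=
    hCol _ hB y hy _ fun i => by have := hyeig i; rw [happ] at this; linarith
  linarith

lemma TNonneg.tApply_rpow_mul_rpow_le_of_eq {A : Tensor m n} (hA : TNonneg A) {u v : Fin n → ℝ}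
    (hu : ∀ i, 0 < u i) (hv : ∀ i, 0 < v i) {t : ℝ} (ht0 : 0 < t) (ht1 : t < 1) {p q : ℝ}
    {a : Fin n} (hua : tApply A u a = p * u a ^ m) (hva : tApply A v a = q * v a ^ m) :
    tApply A (fun b => u b ^ t * v b ^ (1 - t)) a
      ≤ p ^ t * q ^ (1 - t) * (u a ^ t * v a ^ (1 - t)) ^ m := by
  calc tApply A (fun b => u b ^ t * v b ^ (1 - t)) a
      ≤ tApply A u a ^ t * tApply A v a ^ (1 - t) :=
        hA.tApply_rpow_mul_rpow_le (fun i => (hu i).le) (fun i => (hv i).le) ht0 ht1 a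
    _ = p ^ t * q ^ (1 - t) * (u a ^ t * v a ^ (1 - t)) ^ m := by
        rw [hua, hva, Real.mul_rpow (hA.nonneg_of_tApply_eq hu hua) (pow_nonneg (hu a).le m),
          Real.mul_rpow (hA.nonneg_of_tApply_eq hv hva) (pow_nonneg (hv a).le m),
          ← Real.rpow_pow_comm (hu a).le, ← Real.rpow_pow_comm (hv a).le, mul_pow]
        ring

lemma tApply_add_mul_add_mul (A : Tensor m n) {C D : Tensor m n} (hC : TDiagonal C)
    (hD : TDiagonal D) (t : ℝ) (x : Fin n → ℝ) (a : Fin n) :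
    tApply (fun idx => A idx + t * C idx + (1 - t) * D idx) x a
      = tApply A x a + (t * C (fun _ => a) + (1 - t) * D (fun _ => a)) * x a ^ m := by
  rw [tApply_add (fun idx => A idx + t * C idx), tApply_add, tApply_const_mul, tApply_const_mul,
    hC.tApply_eq, hD.tApply_eq]
  ring

lemma diag_sub_eq_of_specRad_eq (hPF : HasPerronVectors m n) {A C D : Tensor m n}
    (hA : TNonneg A) (hirr : TIrreducible A) (hC : TDiagonal C) (hCnn : TNonneg C)
    (hD : TDiagonal D) (hDnn : TNonneg D) {t : ℝ} (ht0 : 0 < t) (ht1 : t < 1)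
    (hE : specRad (fun idx => A idx + t * C idx + (1 - t) * D idx) =
      t * specRad (fun idx => A idx + C idx) + (1 - t) * specRad (fun idx => A idx + D idx))
    (i : Fin n) :
    D (fun _ => i) - C (fun _ => i) =
      specRad (fun idx => A idx + D idx) - specRad (fun idx => A idx + C idx) := by
  set ρC := specRad (fun idx => A idx + C idx)
  set ρD := specRad (fun idx => A idx + D idx)
  have htC : TNonneg fun idx => t * C idx := fun idx => mul_nonneg ht0.le (hCnn idx)
  have htD : TNonneg fun idx => (1 - t) * D idx := fun idx => mul_nonneg (by linarith) (hDnn idx)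
  have hBtnn := (hA.add htC).add htD
  have hBtirr := hirr.mono (S := fun idx => A idx + t * C idx + (1 - t) * D idx) hA
    fun idx => by linarith [htC idx, htD idx]
  obtain ⟨u, hu, hueig⟩ :=
    hPF _ (hA.add hCnn) (hirr.mono hA fun idx => le_add_of_nonneg_right (hCnn idx))
  obtain ⟨v, hv, hveig⟩ :=
    hPF _ (hA.add hDnn) (hirr.mono hA fun idx => le_add_of_nonneg_right (hDnn idx))
  obtain ⟨x, hx, hxeig⟩ := hPF _ hBtnn hBtirr
  set p : Fin n → ℝ := fun a => ρC - C (fun _ => a)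
  set q : Fin n → ℝ := fun a => ρD - D (fun _ => a)
  have hAu : ∀ a, tApply A u a = p a * u a ^ m := fun a => by
    linear_combination (tApply_add_diagonal A hC u a).symm.trans (hueig a)
  have hAv : ∀ a, tApply A v a = q a * v a ^ m := fun a => by
    linear_combination (tApply_add_diagonal A hD v a).symm.trans (hveig a)
  have hp : ∀ a, 0 ≤ p a := fun a => hA.nonneg_of_tApply_eq hu (hAu a)
  have hq : ∀ a, 0 ≤ q a := fun a => hA.nonneg_of_tApply_eq hv (hAv a)
  set w : Fin n → ℝ := fun b => u b ^ t * v b ^ (1 - t)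
  have hw : ∀ a, 0 < w a := fun a => mul_pos (Real.rpow_pos_of_pos (hu a) t)
    (Real.rpow_pos_of_pos (hv a) (1 - t))
  have hwm : ∀ a, 0 < w a ^ m := fun a => pow_pos (hw a) m
  have hAw := fun a => hA.tApply_rpow_mul_rpow_le_of_eq hu hv ht0 ht1 (hAu a) (hAv a)
  have hamgm : ∀ a, p a ^ t * q a ^ (1 - t) ≤ t * p a + (1 - t) * q a := fun a =>
    Real.geom_mean_le_arith_mean2_weighted ht0.le (by linarith) (hp a) (hq a) (by ring)
  have hsub : ∀ a, tApply (fun idx => A idx + t * C idx + (1 - t) * D idx) w a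
      ≤ (t * ρC + (1 - t) * ρD) * w a ^ m := fun a => by
    rw [tApply_add_mul_add_mul A hC hD]
    nlinarith [hAw a, mul_le_mul_of_nonneg_right (hamgm a) (hwm a).le]
  -- `w` is a subeigenvector for `ρ(B_t)`, hence an eigenvector, so Hölder and AM-GM are tight
  have heq := hBtirr.tApply_eq_of_le hBtnn hx hw hxeig (hE ▸ hsub) i
  rw [tApply_add_mul_add_mul A hC hD, hE] at heq
  have hge : t * p i + (1 - t) * q i ≤ p i ^ t * q i ^ (1 - t) :=
    le_of_mul_le_mul_right (by linarith [hAw i]) (hwm i)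
  have hpq : p i = q i := (Real.geom_mean_eq_arith_mean2_weighted_iff_of_pos ht0 (by linarith)
    (hp i) (hq i) (by ring)).1 (le_antisymm (hamgm i) hge)
  linarith

lemma specRad_add_mul_add_mul_of_sub_eq_mul_unitT (hPF : HasPerronVectors m n)
    (hCol : HasCollatzBound m n) {A C D : Tensor m n} (hA : TNonneg A) (hirr : TIrreducible A)
    (hCnn : TNonneg C) (hDnn : TNonneg D) {t : ℝ} (ht0 : 0 ≤ t) (ht1 : t ≤ 1) {c : ℝ}
    (hc : ∀ idx, D idx - C idx = c * unitT m n idx) :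
    specRad (fun idx => A idx + t * C idx + (1 - t) * D idx) =
      t * specRad (fun idx => A idx + C idx) + (1 - t) * specRad (fun idx => A idx + D idx) := by
  rcases le_or_gt 0 c with hc0 | hc0
  · have hACirr := hirr.mono hA fun idx => le_add_of_nonneg_right (hCnn idx)
    rw [specRad_eq_add_of_eq_add_mul_unitT hPF hCol (hA.add hCnn) hACirr hc0
        (B' := fun idx => A idx + D idx) fun idx => by linear_combination hc idx,
      specRad_eq_add_of_eq_add_mul_unitT hPF hCol (hA.add hCnn) hACirr
        (mul_nonneg (sub_nonneg.2 ht1) hc0) fun idx => by linear_combination (1 - t) * hc idx]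
    ring
  · have hADirr := hirr.mono hA fun idx => le_add_of_nonneg_right (hDnn idx)
    rw [specRad_eq_add_of_eq_add_mul_unitT hPF hCol (hA.add hDnn) hADirr (neg_nonneg.2 hc0.le)
        (B' := fun idx => A idx + C idx) fun idx => by linear_combination -hc idx,
      specRad_eq_add_of_eq_add_mul_unitT hPF hCol (hA.add hDnn) hADirr
        (mul_nonneg ht0 (neg_nonneg.2 hc0.le)) fun idx => by linear_combination -t * hc idx]
    ring

/-- equality case in the convexity of the spectral radius. -/
theorem stmt10 {m n : ℕ} (hn : 0 < n) (A C D : Tensor m n)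
    (hA : TNonneg A) (hirr : TIrreducible A)
    (hC : TDiagonal C) (hCnn : TNonneg C)
    (hD : TDiagonal D) (hDnn : TNonneg D)
    (hPF : ∀ B : Tensor m n, TNonneg B → TIrreducible B →
      ∃ x : Fin n → ℝ, (∀ i, 0 < x i) ∧ 0 < specRad B ∧
        ∀ i, tApply B x i = specRad B * (x i) ^ m)
    (hCollatz : ∀ B : Tensor m n, TNonneg B → ∀ z : Fin n → ℝ, (∀ i, 0 < z i) →
      specRad B ≤ Finset.univ.sup' (Finset.univ_nonempty_iff.mpr ⟨⟨0, hn⟩⟩)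
        (fun i => tApply B z i / (z i) ^ m))
    (t : ℝ) (ht : t ∈ Set.Ioo (0 : ℝ) 1) :
    (specRad (fun idx => A idx + t * C idx + (1 - t) * D idx) =
        t * specRad (fun idx => A idx + C idx) +
          (1 - t) * specRad (fun idx => A idx + D idx) ↔
      ∃ c : ℝ, ∀ idx, D idx - C idx = c * unitT m n idx) ∧
    (specRad (fun idx => A idx + t * C idx + (1 - t) * D idx) =
        t * specRad (fun idx => A idx + C idx) +
          (1 - t) * specRad (fun idx => A idx + D idx) →
      ∀ idx, D idx - C idx =
        (specRad (fun idx => A idx + D idx) -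
          specRad (fun idx => A idx + C idx)) * unitT m n idx) := by
  obtain ⟨ht0, ht1⟩ := ht
  have hPF' : HasPerronVectors m n := fun B hB hBirr =>
    (hPF B hB hBirr).imp fun _ hx => ⟨hx.1, hx.2.2⟩
  have hCol := hasCollatzBound_of_le_sup' hn hCollatz
  have hforward := fun hE =>
    (hD.sub hC).eq_mul_unitT (diag_sub_eq_of_specRad_eq hPF' hA hirr hC hCnn hD hDnn ht0 ht1 hE)
  exact ⟨⟨fun hE => ⟨_, hforward hE⟩, fun ⟨_, hc⟩ =>
    specRad_add_mul_add_mul_of_sub_eq_mul_unitT hPF' hCol hA hirr hCnn hDnn ht0.le ht1.le hc⟩,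
    hforward⟩
end

section
/- Let A be a nonnegative tensor of order m and dimension n and x a strictly positive vector. Assume ρ(A) is an eigenvalue with a nonzero nonnegative eigenvector. Then min_{1≤i≤n} (A x^{m-1})_i / x_i^{m-1} ≤ ρ(A). -/
open Finset

/-! For `m ≥ 1` the bound is witnessed by an actual real eigenvalue `r ≥ μ`, where `μ` is the
minimum on the left. For a positive tensor `B`, maximise `r` over the compact set of pairs
`(r, w)` with `w ≥ 0`, `max_i w i = 1` and `r * w i ^ m ≤ tApply B w i` for all `i`; it contains
the normalised `x` with `r = μ`. If a maximiser had a strict inequality in some coordinate,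
enlarging that coordinate of `w` would, by positivity of `B`, make every inequality strict and so
allow a larger `r`. A nonnegative `A` is the limit of the positive tensors `A + ε`, and
compactness passes their eigenpairs to `A`. Every eigenvalue is at most `specRad A` in modulus,
since the eigen-equation at a coordinate of maximal modulus bounds it by a row sum.

For `m = 0`, `tApply A x i` does not depend on `x`, and the eigen-equation of `u` says it is
`specRad A`.
-/

open Topology Filter

section

variable {m n : ℕ}

def rowSum (B : Tensor m n) (i : Fin n) : ℝ := ∑ j : Fin m → Fin n, B (Fin.cons i j)

def IsSubEig (B : Tensor m n) (r : ℝ) (w : Fin n → ℝ) : Prop :=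
  ∀ i, r * w i ^ m ≤ tApply B w i

-- `Fin n → ℝ` carries the sup norm, so this is `{w | 0 ≤ w ∧ max_i w i = 1}`.
def nonnegUnitSphere (n : ℕ) : Set (Fin n → ℝ) := Set.Ici 0 ∩ Metric.sphere 0 1

lemma rowSum_nonneg {B : Tensor m n} (hB : TNonneg B) (i : Fin n) : 0 ≤ rowSum B i :=
  sum_nonneg fun _ _ => hB _

lemma norm_tApplyC_le {B : Tensor m n} (hB : TNonneg B) (y : Fin n → ℂ) (i : Fin n) :
    ‖tApplyC B y i‖ ≤ rowSum B i * ‖y‖ ^ m := by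
  rw [rowSum, sum_mul]
  refine (norm_sum_le _ _).trans (sum_le_sum fun j _ => ?_)
  rw [norm_mul, Complex.norm_real, Real.norm_of_nonneg (hB _), norm_prod]
  gcongr
  · exact hB _
  · calc ∏ k, ‖y (j k)‖ ≤ ∏ _k : Fin m, ‖y‖ :=
          prod_le_prod (fun _ _ => norm_nonneg _) fun k _ => norm_le_pi_norm y _
      _ = ‖y‖ ^ m := by simp

lemma norm_tApply_le {B : Tensor m n} (hB : TNonneg B) (w : Fin n → ℝ) (i : Fin n) :
    ‖tApply B w i‖ ≤ rowSum B i * ‖w‖ ^ m := by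
  rw [rowSum, sum_mul]
  refine (norm_sum_le _ _).trans (sum_le_sum fun j _ => ?_)
  rw [norm_mul, Real.norm_of_nonneg (hB _), norm_prod]
  gcongr
  · exact hB _
  · calc ∏ k, ‖w (j k)‖ ≤ ∏ _k : Fin m, ‖w‖ :=
          prod_le_prod (fun _ _ => norm_nonneg _) fun k _ => norm_le_pi_norm w _
      _ = ‖w‖ ^ m := by simp

lemma bddAbove_eigNorms {A : Tensor m n} (hA : TNonneg A) :
    BddAbove {r : ℝ | ∃ lam : ℂ, IsEig A lam ∧ ‖lam‖ = r} := by
  refine ⟨∑ i, rowSum A i, ?_⟩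
  rintro _ ⟨lam, ⟨y, hy0, hy⟩, rfl⟩
  have : Nonempty (Fin n) := ⟨(Function.ne_iff.1 hy0).choose⟩
  obtain ⟨i, hi⟩ := (IsGreatest.pi_norm y).1
  have hle : ‖lam‖ * ‖y‖ ^ m ≤ rowSum A i * ‖y‖ ^ m := by
    simpa [hy i, hi] using norm_tApplyC_le hA y i
  exact (le_of_mul_le_mul_right hle (pow_pos (norm_pos_iff.2 hy0) m)).trans
    (single_le_sum (fun i _ => rowSum_nonneg hA i) (mem_univ i))

lemma norm_le_specRad {A : Tensor m n} (hA : TNonneg A) {lam : ℂ} (h : IsEig A lam) :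
    ‖lam‖ ≤ specRad A :=
  le_csSup (bddAbove_eigNorms hA) ⟨lam, h, rfl⟩

lemma isEig_ofReal {A : Tensor m n} {r : ℝ} {w : Fin n → ℝ} (hw : w ≠ 0)
    (h : ∀ i, tApply A w i = r * w i ^ m) : IsEig A r := by
  refine ⟨fun i => w i, fun h0 => hw (funext fun i => by simpa using congrFun h0 i), fun i => ?_⟩
  have : tApplyC A (fun i => (w i : ℂ)) i = tApply A w i := by simp [tApplyC, tApply]
  rw [this, h i]
  push_cast
  rfl

lemma tApply_smul (B : Tensor m n) (c : ℝ) (w : Fin n → ℝ) (i : Fin n) :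
    tApply B (c • w) i = c ^ m * tApply B w i := by
  simp only [tApply, mul_sum, Pi.smul_apply, smul_eq_mul, prod_mul_distrib, prod_const,
    card_univ, Fintype.card_fin]
  exact sum_congr rfl fun _ _ => by ring

lemma tApply_le_tApply_of_le {A B : Tensor m n} (hAB : ∀ idx, A idx ≤ B idx) {w : Fin n → ℝ}
    (hw : 0 ≤ w) (i : Fin n) : tApply A w i ≤ tApply B w i :=
  sum_le_sum fun _ _ => mul_le_mul_of_nonneg_right (hAB _) (prod_nonneg fun _ _ => hw _)

lemma tApply_lt_tApply (hm : m ≠ 0) {B : Tensor m n} (hB : ∀ idx, 0 < B idx)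
    {v w : Fin n → ℝ} (hv : 0 ≤ v) (hvw : v ≤ w) {j : Fin n} (hj : v j < w j) (i : Fin n) :
    tApply B v i < tApply B w i := by
  refine sum_lt_sum (fun l _ => ?_) ⟨fun _ => j, mem_univ _, ?_⟩
  · exact mul_le_mul_of_nonneg_left (prod_le_prod (fun _ _ => hv _) fun _ _ => hvw _) (hB _).le
  · simp only [prod_const, card_univ, Fintype.card_fin]
    gcongr
    · exact hB _
    · exact hv _

lemma continuous_tApply (B : Tensor m n) (i : Fin n) : Continuous fun w => tApply B w i := by
  unfold tApply
  fun_prop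

lemma isSubEig_smul {B : Tensor m n} {r : ℝ} {w : Fin n → ℝ} (h : IsSubEig B r w) {c : ℝ}
    (hc : 0 ≤ c) : IsSubEig B r (c • w) := by
  intro i
  rw [tApply_smul, Pi.smul_apply, smul_eq_mul, mul_pow, mul_left_comm]
  exact mul_le_mul_of_nonneg_left (h i) (pow_nonneg hc m)

lemma isCompact_nonnegUnitSphere : IsCompact (nonnegUnitSphere n) :=
  (isCompact_sphere 0 1).inter_left isClosed_Ici

lemma inv_norm_smul_mem_nonnegUnitSphere {w : Fin n → ℝ} (h0 : 0 ≤ w) (hw : w ≠ 0) :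
    ‖w‖⁻¹ • w ∈ nonnegUnitSphere n :=
  ⟨smul_nonneg (inv_nonneg.2 (norm_nonneg w)) h0, by
    rw [mem_sphere_zero_iff_norm, norm_smul, norm_inv, norm_norm,
      inv_mul_cancel₀ (norm_ne_zero_iff.2 hw)]⟩

lemma exists_eq_one_of_mem_nonnegUnitSphere {w : Fin n → ℝ} (hw : w ∈ nonnegUnitSphere n) :
    ∃ i, w i = 1 := by
  have hnorm : ‖w‖ = 1 := by simpa using hw.2
  have hw0 : w ≠ 0 := ne_zero_of_norm_ne_zero (a := w) (by simp [hnorm])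
  have : Nonempty (Fin n) := ⟨(Function.ne_iff.1 hw0).choose⟩
  obtain ⟨i, hi⟩ := (IsGreatest.pi_norm w).1
  have hi : ‖w i‖ = ‖w‖ := hi
  exact ⟨i, by rwa [hnorm, Real.norm_of_nonneg (hw.1 i)] at hi⟩

lemma le_sum_rowSum_of_isSubEig {B : Tensor m n} (hB : TNonneg B) {r : ℝ} {w : Fin n → ℝ}
    (hw : w ∈ nonnegUnitSphere n) (h : IsSubEig B r w) : r ≤ ∑ i, rowSum B i := by
  obtain ⟨i, hi⟩ := exists_eq_one_of_mem_nonnegUnitSphere hw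
  calc r = r * w i ^ m := by simp [hi]
    _ ≤ tApply B w i := h i
    _ ≤ ‖tApply B w i‖ := Real.le_norm_self _
    _ ≤ rowSum B i * ‖w‖ ^ m := norm_tApply_le hB w i
    _ = rowSum B i := by simp [show ‖w‖ = 1 by simpa using hw.2]
    _ ≤ ∑ i, rowSum B i := single_le_sum (fun i _ => rowSum_nonneg hB i) (mem_univ i)

lemma exists_strictSubEig_of_lt (hm : m ≠ 0) {B : Tensor m n} (hB : ∀ idx, 0 < B idx)
    {r : ℝ} {w : Fin n → ℝ} (hw : 0 ≤ w) (h : IsSubEig B r w) {i₀ : Fin n}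
    (hi₀ : r * w i₀ ^ m < tApply B w i₀) :
    ∃ w', 0 ≤ w' ∧ w' ≠ 0 ∧ ∀ i, r * w' i ^ m < tApply B w' i := by
  have hcont : ContinuousAt (fun t : ℝ => r * (w i₀ + t) ^ m) 0 := by fun_prop
  obtain ⟨t, hrt, ht⟩ : ∃ t, r * (w i₀ + t) ^ m < tApply B w i₀ ∧ 0 < t :=
    ((eventually_nhdsWithin_of_eventually_nhds
      (hcont.eventually (gt_mem_nhds (by simpa using hi₀)))).and
        (eventually_mem_nhdsWithin (s := Set.Ioi 0))).exists
  set w' := Function.update w i₀ (w i₀ + t)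
  have hle : w ≤ w' := by
    intro i
    rcases eq_or_ne i i₀ with rfl | hi
    · simp [w', ht.le]
    · simp [w', hi]
  have hlt : w i₀ < w' i₀ := by simp [w', ht]
  refine ⟨w', hw.trans hle, fun h0 => ?_, fun i => ?_⟩
  · simpa [h0] using (hw i₀).trans_lt hlt
  have hmono := tApply_lt_tApply hm hB hw hle hlt i
  rcases eq_or_ne i i₀ with rfl | hi
  · simpa [w'] using hrt.trans hmono
  · simpa [w', hi] using (h i).trans_lt hmono

lemma exists_isSubEig_add_of_strict {B : Tensor m n} {r : ℝ} {w : Fin n → ℝ}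
    (h : ∀ i, r * w i ^ m < tApply B w i) : ∃ η > 0, IsSubEig B (r + η) w := by
  have hev : ∀ᶠ η in 𝓝 (0 : ℝ), ∀ i, (r + η) * w i ^ m < tApply B w i :=
    eventually_all.2 fun i =>
      (show ContinuousAt (fun η : ℝ => (r + η) * w i ^ m) 0 by fun_prop).eventually
        (gt_mem_nhds (by simpa using h i))
  obtain ⟨η, hη, hη0⟩ := ((eventually_nhdsWithin_of_eventually_nhds hev).and
    (eventually_mem_nhdsWithin (s := Set.Ioi 0))).exists
  exact ⟨η, hη0, fun i => (hη i).le⟩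

theorem exists_eigenpair_ge_of_pos (hm : m ≠ 0) {B : Tensor m n} (hB : ∀ idx, 0 < B idx)
    {μ : ℝ} {z : Fin n → ℝ} (hz0 : 0 ≤ z) (hz : z ≠ 0) (hμ : IsSubEig B μ z) :
    ∃ r, μ ≤ r ∧ ∃ w ∈ nonnegUnitSphere n, ∀ i, tApply B w i = r * w i ^ m := by
  have hBnn : TNonneg B := fun idx => (hB idx).le
  set S := {p : ℝ × (Fin n → ℝ) | μ ≤ p.1 ∧ p.2 ∈ nonnegUnitSphere n ∧ IsSubEig B p.1 p.2}
  have hS : IsCompact S := by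
    refine (isCompact_Icc.prod isCompact_nonnegUnitSphere).of_isClosed_subset ?_
      fun p hp => ⟨⟨hp.1, le_sum_rowSum_of_isSubEig hBnn hp.2.1 hp.2.2⟩, hp.2.1⟩
    simp only [S, IsSubEig, Set.ofPred_and, Set.ofPred_forall]
    exact (isClosed_le continuous_const continuous_fst).inter
      ((isCompact_nonnegUnitSphere.isClosed.preimage continuous_snd).inter
        (isClosed_iInter fun i => isClosed_le (by fun_prop)
          ((continuous_tApply B i).comp continuous_snd)))
  obtain ⟨⟨r, w⟩, ⟨hμr, hw, hsub⟩, hmax⟩ := hS.exists_isMaxOn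
    ⟨(μ, ‖z‖⁻¹ • z), le_rfl, inv_norm_smul_mem_nonnegUnitSphere hz0 hz,
      isSubEig_smul hμ (by positivity)⟩ continuous_fst.continuousOn
  refine ⟨r, hμr, w, hw, fun i => ?_⟩
  by_contra hne
  obtain ⟨w', hw'0, hw'ne, hstrict⟩ :=
    exists_strictSubEig_of_lt hm hB hw.1 hsub ((hsub i).lt_of_ne (Ne.symm hne))
  obtain ⟨η, hη, hsub'⟩ := exists_isSubEig_add_of_strict hstrict
  have := isMaxOn_iff.1 hmax (r + η, ‖w'‖⁻¹ • w') ⟨by linarith,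
    inv_norm_smul_mem_nonnegUnitSphere hw'0 hw'ne, isSubEig_smul hsub' (by positivity)⟩
  simp only at this
  linarith

theorem exists_eigenpair_ge (hm : m ≠ 0) {A : Tensor m n} (hA : TNonneg A) {μ : ℝ}
    {x : Fin n → ℝ} (hx0 : 0 ≤ x) (hx : x ≠ 0) (hμ : IsSubEig A μ x) :
    ∃ r, μ ≤ r ∧ ∃ w ∈ nonnegUnitSphere n, ∀ i, tApply A w i = r * w i ^ m := by
  set R := ∑ i, rowSum (fun idx => A idx + 1) i
  set E := (Set.Icc 0 1 ×ˢ Set.Icc μ R ×ˢ nonnegUnitSphere n) ∩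
    {p : ℝ × ℝ × (Fin n → ℝ) | ∀ i, tApply (fun idx => A idx + p.1) p.2.2 i = p.2.1 * p.2.2 i ^ m}
  have hE : IsCompact E := by
    refine (isCompact_Icc.prod (isCompact_Icc.prod isCompact_nonnegUnitSphere)).inter_right ?_
    simp only [Set.ofPred_forall]
    exact isClosed_iInter fun i => isClosed_eq (by unfold tApply; fun_prop) (by fun_prop)
  have hpert : Set.Ioc 0 1 ⊆ Prod.fst '' E := by
    rintro ε ⟨hε0, hε1⟩
    have hAε : ∀ idx, 0 < A idx + ε := fun idx => by linarith [hA idx]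
    obtain ⟨r, hμr, w, hw, hrw⟩ := exists_eigenpair_ge_of_pos hm hAε hx0 hx fun i =>
      (hμ i).trans (tApply_le_tApply_of_le (fun idx => by linarith) hx0 i)
    have hrR : r ≤ R :=
      (le_sum_rowSum_of_isSubEig (fun idx => (hAε idx).le) hw fun i => (hrw i).ge).trans
        (sum_le_sum fun i _ => sum_le_sum fun j _ => by linarith)
    exact ⟨(ε, r, w), ⟨⟨⟨hε0.le, hε1⟩, ⟨hμr, hrR⟩, hw⟩, hrw⟩, rfl⟩
  have h0 : (0 : ℝ) ∈ Prod.fst '' E :=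
    (hE.image continuous_fst).isClosed.closure_subset_iff.2 hpert
      (by rw [closure_Ioc zero_ne_one]; exact ⟨le_rfl, zero_le_one⟩)
  obtain ⟨⟨_, r, w⟩, ⟨⟨-, ⟨hμr, -⟩, hw⟩, hrw⟩, rfl⟩ := h0
  exact ⟨r, hμr, w, hw, fun i => by simpa using hrw i⟩

end

theorem stmt19_general {m n : ℕ} (hn : 0 < n) (A : Tensor m n) (hA : TNonneg A)
    (x : Fin n → ℝ) (hx : ∀ i, 0 < x i)
    (u : Fin n → ℝ)
    (hue : ∀ i, tApply A u i = specRad A * (u i) ^ m) :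
    Finset.univ.inf' (Finset.univ_nonempty_iff.mpr ⟨⟨0, hn⟩⟩)
      (fun i => tApply A x i / (x i) ^ m) ≤ specRad A := by
  set μ := Finset.univ.inf' (Finset.univ_nonempty_iff.mpr ⟨⟨0, hn⟩⟩)
    (fun i => tApply A x i / (x i) ^ m)
  rcases eq_or_ne m 0 with rfl | hm
  · calc μ ≤ tApply A x ⟨0, hn⟩ / x ⟨0, hn⟩ ^ 0 := inf'_le _ (mem_univ _)
      _ = tApply A u ⟨0, hn⟩ := by simp [tApply]
      _ = specRad A := by simp [hue]
  · have hμ : IsSubEig A μ x := fun i =>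
      (le_div_iff₀ (pow_pos (hx i) m)).1 (inf'_le _ (mem_univ i))
    have hx0 : x ≠ 0 := fun h => (hx ⟨0, hn⟩).ne' (congrFun h _)
    obtain ⟨r, hμr, w, hw, hrw⟩ := exists_eigenpair_ge hm hA (fun i => (hx i).le) hx0 hμ
    have hw0 : w ≠ 0 := fun h => by simpa [h] using hw.2
    calc μ ≤ r := hμr
      _ ≤ ‖(r : ℂ)‖ := by simpa using le_abs_self r
      _ ≤ specRad A := norm_le_specRad hA (isEig_ofReal hw0 hrw)

/-- Collatz lower bound for the spectral radius. -/
theorem stmt19 {m n : ℕ} (hn : 0 < n) (A : Tensor m n) (hA : TNonneg A)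
    (x : Fin n → ℝ) (hx : ∀ i, 0 < x i)
    (u : Fin n → ℝ) (hu0 : u ≠ 0) (hunn : ∀ i, 0 ≤ u i)
    (hue : ∀ i, tApply A u i = specRad A * (u i) ^ m) :
    Finset.univ.inf' (Finset.univ_nonempty_iff.mpr ⟨⟨0, hn⟩⟩)
      (fun i => tApply A x i / (x i) ^ m) ≤ specRad A :=
  stmt19_general hn A hA x hx u hue
end
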